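/- arXiv:1609.06841 — 6 statements merged into one kernel-verified Lean document; each statement's English description precedes it below -/
import Mathlib

section
/- The positions of nodes on a virtual ring derived from a depth-first traversal of a tree are never interlaced: if a position of v is followed (in cyclic order) by a position of w, then another position of v, then no further position of w can occur before returning to the first position of v. Formally, there do not exist positions p_1 < p_2 < p_3 < p_4 (in cyclic order) with R_{p_1} = R_{p_3} = v and R_{p_2} = R_{p_4} = w for distinct vertices v ≠ w. -/
private lemma flip_lemma (g : ℕ → Bool) :
    ∀ b a, a < b → g a ≠ g b → ∃ j, a ≤ j ∧ j < b ∧ g j ≠ g (j + 1) := by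
  intro b
  induction b with
  | zero => intro a h; omega
  | succ b ih =>
    intro a hab hg
    by_cases hb : g b = g (b + 1)
    · have hab' : a < b := by
        rcases Nat.lt_succ_iff_lt_or_eq.mp hab with h | h
        · exact h
        · exact absurd (h ▸ hb) hg
      obtain ⟨j, h1, h2, h3⟩ := ih a hab' (fun h => hg (h.trans hb))
      exact ⟨j, h1, h2.trans (Nat.lt_succ_self b), h3⟩
    · exact ⟨b, Nat.lt_succ_iff.mp hab, Nat.lt_succ_self b, hb⟩

def IsEulerRing {V : Type} [Fintype V] (T : SimpleGraph V) (l : ℕ) (R : ZMod l → V) : Prop :=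
  l = 2 * (Fintype.card V - 1) ∧ Function.Surjective R ∧
    (∀ i : ZMod l, T.Adj (R i) (R (i + 1))) ∧
    ∀ e ∈ T.edgeSet, Nat.card {i : ZMod l // s(R i, R (i + 1)) = e} = 2

/-- Positions of nodes on the Euler-tour virtual ring of a tree are never
interlaced: there are no positions `i₁ < i₂ < i₃ < i₄` (in cyclic order, represented here by
indices below `l`) carrying the pattern `v, w, v, w` for two distinct vertices `v ≠ w`. -/
theorem stmt_5 {V : Type} [Fintype V] (T : SimpleGraph V) (hT : T.IsTree)
    (hn : 2 ≤ Fintype.card V) (l : ℕ) [NeZero l] (R : ZMod l → V)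
    (h : IsEulerRing T l R) :
    ¬ ∃ (v w : V) (i₁ i₂ i₃ i₄ : ℕ), v ≠ w ∧
        i₁ < i₂ ∧ i₂ < i₃ ∧ i₃ < i₄ ∧ i₄ < l ∧
        R (i₁ : ZMod l) = v ∧ R (i₂ : ZMod l) = w ∧
        R (i₃ : ZMod l) = v ∧ R (i₄ : ZMod l) = w := by
  classical
  rintro ⟨v, w, i₁, i₂, i₃, i₄, hvw, h12, h23, h34, h4l, hR1, hR2, hR3, hR4⟩
  obtain ⟨hl, hsurj, hadj, hcount⟩ := h
  -- get a path from v to w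
  obtain ⟨p0⟩ := hT.isConnected.preconnected v w
  set p : T.Walk v w := p0.toPath.1 with hp
  have hpath : p.IsPath := p0.toPath.2
  obtain ⟨u, hvu, p', hcons⟩ := SimpleGraph.Walk.exists_eq_cons_of_ne hvw p
  -- the edge e = s(v,u) is a bridge
  have hbridge : T.IsBridge s(v, u) :=
    SimpleGraph.isAcyclic_iff_forall_adj_isBridge.mp hT.IsAcyclic hvu
  have hnr : ¬ (T.deleteEdges {s(v, u)}).Reachable v u := hbridge
  -- tail walk avoids the edge
  have hp'edges : ∀ e ∈ p'.edges, e ∉ ({s(v, u)} : Set (Sym2 V)) := by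
    intro e he hmem
    rw [Set.mem_singleton_iff] at hmem
    subst hmem
    have hv : v ∈ p'.support := p'.fst_mem_support_of_mem_edges he
    rw [hcons, SimpleGraph.Walk.cons_isPath_iff] at hpath
    exact hpath.2 hv
  have hruw : (T.deleteEdges {s(v, u)}).Reachable u w :=
    ⟨p'.toDeleteEdges _ hp'edges⟩
  -- the cut predicate
  set c : V → Prop := fun x => (T.deleteEdges {s(v, u)}).Reachable v x with hc
  have hcv : c v := SimpleGraph.Reachable.refl v
  have hcw : ¬ c w := fun hr => hnr (hr.trans hruw.symm)
  -- crossing lemma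
  have hcross : ∀ i : ZMod l, ¬ (c (R i) ↔ c (R (i + 1))) → s(R i, R (i + 1)) = s(v, u) := by
    intro i hne
    by_contra hns
    have hadj' : (T.deleteEdges {s(v, u)}).Adj (R i) (R (i + 1)) :=
      SimpleGraph.deleteEdges_adj.mpr ⟨hadj i, by simpa using hns⟩
    exact hne ⟨fun hr => hr.trans hadj'.reachable, fun hr => hr.trans hadj'.symm.reachable⟩
  -- boolean profile
  set g : ℕ → Bool := fun n => decide (c (R (n : ZMod l))) with hg
  have hg1 : g i₁ = true := by simp [hg, hR1, hcv]
  have hg2 : g i₂ = false := by simp [hg, hR2, hcw]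
  have hg3 : g i₃ = true := by simp [hg, hR3, hcv]
  have hg4 : g i₄ = false := by simp [hg, hR4, hcw]
  obtain ⟨j₁, ha1, hb1, hne1⟩ := flip_lemma g i₂ i₁ h12 (by rw [hg1, hg2]; simp)
  obtain ⟨j₂, ha2, hb2, hne2⟩ := flip_lemma g i₃ i₂ h23 (by rw [hg2, hg3]; simp)
  obtain ⟨j₃, ha3, hb3, hne3⟩ := flip_lemma g i₄ i₃ h34 (by rw [hg3, hg4]; simp)
  -- crossings as positions on the ring
  have key : ∀ j : ℕ, g j ≠ g (j + 1) → s(R (j : ZMod l), R ((j : ZMod l) + 1)) = s(v, u) := by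
    intro j hj
    apply hcross
    intro hiff
    apply hj
    have : ((j + 1 : ℕ) : ZMod l) = (j : ZMod l) + 1 := by push_cast; ring
    rw [hg]
    simp only [this]
    exact decide_eq_decide.mpr hiff
  have pf1 := key j₁ hne1
  have pf2 := key j₂ hne2
  have pf3 := key j₃ hne3
  -- distinctness
  have hlt1 : j₁ < l := by omega
  have hlt2 : j₂ < l := by omega
  have hlt3 : j₃ < l := by omega
  have hinj : ∀ a b : ℕ, a < l → b < l → (a : ZMod l) = (b : ZMod l) → a = b := by
    intro a b ha hb hab
    have := congrArg ZMod.val hab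
    rwa [ZMod.val_cast_of_lt ha, ZMod.val_cast_of_lt hb] at this
  have hd12 : (j₁ : ZMod l) ≠ (j₂ : ZMod l) := fun h => by
    have := hinj _ _ hlt1 hlt2 h; omega
  have hd13 : (j₁ : ZMod l) ≠ (j₃ : ZMod l) := fun h => by
    have := hinj _ _ hlt1 hlt3 h; omega
  have hd23 : (j₂ : ZMod l) ≠ (j₃ : ZMod l) := fun h => by
    have := hinj _ _ hlt2 hlt3 h; omega
  -- counting
  have hmem : s(v, u) ∈ T.edgeSet := hvu
  have hcard := hcount _ hmem
  rw [Nat.card_eq_fintype_card] at hcard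
  have h3 : 3 ≤ Fintype.card {i : ZMod l // s(R i, R (i + 1)) = s(v, u)} := by
    have hsub : ({⟨(j₁ : ZMod l), pf1⟩, ⟨(j₂ : ZMod l), pf2⟩, ⟨(j₃ : ZMod l), pf3⟩} :
        Finset {i : ZMod l // s(R i, R (i + 1)) = s(v, u)}).card = 3 := by
      rw [Finset.card_insert_of_notMem, Finset.card_insert_of_notMem,
        Finset.card_singleton]
      · simp [Subtype.ext_iff, hd23]
      · simp [Subtype.ext_iff, hd12, hd13]
    calc 3 = _ := hsub.symm
      _ ≤ _ := Finset.card_le_univ _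
  omega
end

section
/- For any vertex v with consecutive positions p_i and p_{i+1} on the Euler-tour virtual ring of a tree T rooted appropriately, the set of vertices occurring at positions strictly between p_i and p_{i+1} is exactly the vertex set of one subtree of T hanging off v (one connected component of T minus v adjacent to v via one edge), and every position of each such vertex lies in that interval. -/
/-- `x` lies counter-clockwise strictly between `a` and `b` on the ring `ZMod l`
(if `a = b` this is the whole ring except `a`). -/
def CcwStrictBetween {l : ℕ} (x a b : ZMod l) : Prop :=
  if a = b then x ≠ a else 0 < (x - a).val ∧ (x - a).val < (b - a).val

/-- `p` and `q` are (cyclically) consecutive positions of the vertex `v` on the ring `R`: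
both carry `v` and no position of `v` lies ccw strictly between them. -/
def ConsecPos {V : Type} {l : ℕ} (R : ZMod l → V) (v : V) (p q : ZMod l) : Prop :=
  R p = v ∧ R q = v ∧ ∀ i : ZMod l, R i = v → ¬ CcwStrictBetween i p q

lemma cross_aux {V : Type} {T : SimpleGraph V} (hT : T.IsTree) {u v : V} (huv : T.Adj v u)
    {x y : V} (hx : ∃ wk : T.Walk u x, v ∉ wk.support)
    (hy : ¬ ∃ wk : T.Walk u y, v ∉ wk.support) (hadj : T.Adj x y) : x = u ∧ y = v := by
  classical
  obtain ⟨wk, hwk⟩ := hx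
  have hyv : y = v := by
    by_contra hne
    refine hy ⟨wk.concat hadj, ?_⟩
    rw [SimpleGraph.Walk.support_concat]
    simp only [List.concat_eq_append, List.mem_append, List.mem_singleton]
    rintro (hm | hm)
    · exact hwk hm
    · exact hne hm.symm
  have hadj' : T.Adj x v := by rw [← hyv]; exact hadj
  refine ⟨?_, hyv⟩
  by_contra hxu
  have hxv : x ≠ v := by
    intro hxv
    apply hwk
    rw [← hxv]
    exact wk.end_mem_support
  have hb := wk.bypass_isPath
  have hbv : v ∉ wk.bypass.support := fun hm => hwk (wk.support_bypass_subset hm)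
  have hP1 : (SimpleGraph.Walk.cons huv wk.bypass).IsPath := by
    rw [SimpleGraph.Walk.cons_isPath_iff]; exact ⟨hb, hbv⟩
  have hP2 : (SimpleGraph.Walk.cons hadj'.symm SimpleGraph.Walk.nil : T.Walk v x).IsPath := by
    rw [SimpleGraph.Walk.cons_isPath_iff]
    simp only [SimpleGraph.Walk.isPath_iff_eq_nil, SimpleGraph.Walk.support_nil,
      List.mem_singleton]
    exact ⟨trivial, fun hv => hxv hv.symm⟩
  have heq := (hT.existsUnique_path v x).unique hP1 hP2
  have hlen := congrArg SimpleGraph.Walk.length heq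
  simp only [SimpleGraph.Walk.length_cons, SimpleGraph.Walk.length_nil,
    add_left_inj] at hlen
  exact hxu (SimpleGraph.Walk.eq_of_length_eq_zero (p := wk.bypass) hlen).symm

/-- For consecutive positions `p, q` of a vertex `v` on the Euler-tour
virtual ring of a tree `T`, the set of vertices occurring strictly between `p` and `q` is
exactly the vertex set of one subtree of `T` hanging off `v` (the set of vertices reachable
from some neighbor `u` of `v` by a path avoiding `v`), and every position of each such
vertex lies in that interval. -/
theorem stmt_6 {V : Type} [Fintype V] (T : SimpleGraph V) (hT : T.IsTree)
    (hn : 2 ≤ Fintype.card V) (l : ℕ) [NeZero l] (R : ZMod l → V)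
    (h : IsEulerRing T l R) (v : V) (p q : ZMod l) (hpq : ConsecPos R v p q) :
    ∃ u : V, T.Adj v u ∧
      {w : V | ∃ i : ZMod l, R i = w ∧ CcwStrictBetween i p q} =
        {w : V | ∃ walk : T.Walk u w, walk.IsPath ∧ v ∉ walk.support} ∧
      ∀ w : V, (∃ i : ZMod l, R i = w ∧ CcwStrictBetween i p q) →
        ∀ j : ZMod l, R j = w → CcwStrictBetween j p q := by
  classical
  obtain ⟨hl, hsurj, hadj, hcount⟩ := h
  obtain ⟨hp, hq, hcons⟩ := hpq
  set u : V := R (p + 1) with hu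
  have huv : T.Adj v u := by rw [← hp]; exact hadj p
  have hvu : v ≠ u := huv.ne
  -- the component of u avoiding v, as walks
  set C : Set V := {w | ∃ wk : T.Walk u w, v ∉ wk.support} with hCdef
  have hvC : v ∉ C := fun ⟨wk, hwk⟩ => hwk wk.end_mem_support
  have huC : u ∈ C := ⟨SimpleGraph.Walk.nil, by
    simp only [SimpleGraph.Walk.support_nil, List.mem_singleton]; exact hvu⟩
  have hlpos : 0 < l := Nat.pos_of_ne_zero (NeZero.ne l)
  have hl2 : 2 ≤ l := by omega
  set D : ℕ := if p = q then l else (q - p).val with hD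
  have hDl : D ≤ l := by
    rw [hD]; split
    · exact le_refl l
    · exact le_of_lt (ZMod.val_lt _)
  have hqpD : q = p + ((D : ℕ) : ZMod l) := by
    rw [hD]; split
    · rename_i hpq'
      rw [ZMod.natCast_self]; rw [← hpq']; ring
    · rw [ZMod.natCast_val, ZMod.cast_id]; ring
  have hD2 : 2 ≤ D := by
    rw [hD]; split
    · exact hl2
    · rename_i hpq'
      rcases Nat.lt_or_ge (q - p).val 2 with hlt | hge
      · interval_cases hv : (q - p).val
        · exact absurd (sub_eq_zero.mp ((ZMod.val_eq_zero _).mp hv)).symm hpq'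
        · exfalso
          have hq1 : q = p + 1 := by
            have : q - p = ((1 : ℕ) : ZMod l) := by
              rw [← hv, ZMod.natCast_val, ZMod.cast_id]
            rw [Nat.cast_one] at this
            rw [← this]; ring
          have := hadj p
          rw [hp, ← hq1, hq] at this
          exact T.irrefl this
      · exact hge
  have hbet : ∀ t : ℕ, 0 < t → t < D → CcwStrictBetween (p + (t : ZMod l)) p q := by
    intro t ht htD
    have hval : (p + (t : ZMod l) - p).val = t := by
      rw [add_sub_cancel_left, ZMod.val_cast_of_lt (lt_of_lt_of_le htD hDl)]
    rw [CcwStrictBetween]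
    split
    · rename_i hpq'
      intro heq
      have : (p + (t : ZMod l) - p).val = 0 := by rw [heq]; simp
      omega
    · rename_i hpq'
      refine ⟨by omega, ?_⟩
      rw [hval]
      have : D = (q - p).val := by rw [hD, if_neg hpq']
      omega
  have hbet' : ∀ i : ZMod l, CcwStrictBetween i p q →
      ∃ t : ℕ, 0 < t ∧ t < D ∧ i = p + ((t : ℕ) : ZMod l) := by
    intro i hi
    refine ⟨(i - p).val, ?_, ?_, ?_⟩
    · rw [CcwStrictBetween] at hi
      split at hi
      · rename_i hpq'
        have : i - p ≠ 0 := fun hz => hi (by rwa [sub_eq_zero] at hz)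
        have := (ZMod.val_eq_zero (i - p)).not.mpr this
        omega
      · exact hi.1
    · rw [CcwStrictBetween] at hi
      split at hi
      · rw [hD, if_pos ‹p = q›]; exact ZMod.val_lt _
      · rw [hD, if_neg ‹¬ p = q›]; exact hi.2
    · rw [ZMod.natCast_val, ZMod.cast_id]; ring
  -- everything strictly inside the interval is in C
  have hind : ∀ t : ℕ, 0 < t → t < D → R (p + (t : ZMod l)) ∈ C := by
    intro t
    induction t with
    | zero => intro ht; omega
    | succ n ih =>
      intro _ hnD
      match n, ih with
      | 0, _ => simpa using huC
      | Nat.succ m, ih =>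
        obtain ⟨wk, hwk⟩ := ih (Nat.succ_pos m) (by omega)
        have hstep := hadj (p + ((m + 1 : ℕ) : ZMod l))
        have hcast : p + ((m + 1 : ℕ) : ZMod l) + 1 = p + ((m + 1 + 1 : ℕ) : ZMod l) := by
          push_cast; ring
        rw [hcast] at hstep
        by_cases hrv : R (p + ((m + 1 + 1 : ℕ) : ZMod l)) = v
        · exact absurd (hbet (m + 1 + 1) (by omega) hnD) (hcons _ hrv)
        · refine ⟨wk.concat hstep, ?_⟩
          rw [SimpleGraph.Walk.support_concat]
          simp only [List.concat_eq_append, List.mem_append, List.mem_singleton]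
          rintro (hm | hm)
          · exact hwk hm
          · exact hrv hm.symm
  -- every position of a vertex of C is strictly inside the interval
  have hpos : ∀ j : ZMod l, R j ∈ C → CcwStrictBetween j p q := by
    intro j hj
    have hjp : j = p + (((j - p).val : ℕ) : ZMod l) := by
      rw [ZMod.natCast_val, ZMod.cast_id]; ring
    set s : ℕ := (j - p).val with hs
    have hsl : s < l := ZMod.val_lt _
    have hs0 : s ≠ 0 := by
      intro h0
      have : j = p := by
        have := (ZMod.val_eq_zero (j - p)).mp h0
        rwa [sub_eq_zero] at this
      rw [this, hp] at hj
      exact hvC hj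
    rcases Nat.lt_or_ge s D with hsD | hsD
    · rw [hjp]; exact hbet s (by omega) hsD
    · exfalso
      -- walk counting argument: positions p + (D + t) are outside C
      have he : s(v, u) ∈ T.edgeSet := huv
      have hout : ∀ t : ℕ, t ≤ l - D → R (p + ((D + t : ℕ) : ZMod l)) ∉ C := by
        intro t
        induction t with
        | zero =>
          intro _
          have : p + ((D + 0 : ℕ) : ZMod l) = q := by rw [hqpD]; norm_num
          rw [this, hq]; exact hvC
        | succ n ih =>
          intro hn1
          have hn0 := ih (by omega)
          intro hcon
          have hstep := hadj (p + ((D + n : ℕ) : ZMod l))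
          have hcast : p + ((D + n : ℕ) : ZMod l) + 1 = p + ((D + (n + 1) : ℕ) : ZMod l) := by
            push_cast; ring
          rw [hcast] at hstep
          obtain ⟨h3u, h3v⟩ := cross_aux hT huv hcon hn0 hstep.symm
          -- three occurrences of the edge s(v,u)
          have e1 : s(R p, R (p + 1)) = s(v, u) := by rw [hp]
          have e2 : s(R (p + ((D - 1 : ℕ) : ZMod l)), R (p + ((D - 1 : ℕ) : ZMod l) + 1))
              = s(v, u) := by
            have hcast2 : p + ((D - 1 : ℕ) : ZMod l) + 1 = p + ((D : ℕ) : ZMod l) := by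
              have : ((D - 1 : ℕ) : ZMod l) + 1 = ((D : ℕ) : ZMod l) := by
                have hD1 : D - 1 + 1 = D := by omega
                calc ((D - 1 : ℕ) : ZMod l) + 1 = (((D - 1 : ℕ) + 1 : ℕ) : ZMod l) := by
                      push_cast; ring
                  _ = ((D : ℕ) : ZMod l) := by rw [hD1]
              rw [add_assoc, this]
            have hC2 : R (p + ((D - 1 : ℕ) : ZMod l)) ∈ C := hind (D - 1) (by omega) (by omega)
            have hV2 : R (p + ((D - 1 : ℕ) : ZMod l) + 1) = v := by
              rw [hcast2, ← hqpD, hq]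
            have hnC2 : R (p + ((D - 1 : ℕ) : ZMod l) + 1) ∉ C := by rw [hV2]; exact hvC
            obtain ⟨hxu, hyv⟩ := cross_aux hT huv hC2 hnC2 (hadj _)
            rw [hxu, hyv, Sym2.eq_swap]
          have e3 : s(R (p + ((D + n : ℕ) : ZMod l)), R (p + ((D + n : ℕ) : ZMod l) + 1))
              = s(v, u) := by
            rw [hcast, h3u, h3v]
          -- distinctness of the three positions
          have hval1 : ((D - 1 : ℕ) : ZMod l).val = D - 1 := ZMod.val_cast_of_lt (by omega)
          have hval2 : ((D + n : ℕ) : ZMod l).val = D + n := ZMod.val_cast_of_lt (by omega)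
          have hne12 : p ≠ p + ((D - 1 : ℕ) : ZMod l) := by
            intro heq
            have : ((D - 1 : ℕ) : ZMod l) = 0 := by
              have := heq.symm
              rwa [add_eq_left] at this
            rw [this] at hval1
            simp only [ZMod.val_zero] at hval1
            omega
          have hne13 : p ≠ p + ((D + n : ℕ) : ZMod l) := by
            intro heq
            have : ((D + n : ℕ) : ZMod l) = 0 := by
              have := heq.symm
              rwa [add_eq_left] at this
            rw [this] at hval2
            simp only [ZMod.val_zero] at hval2
            omega
          have hne23 : p + ((D - 1 : ℕ) : ZMod l) ≠ p + ((D + n : ℕ) : ZMod l) := by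
            intro heq
            have : ((D - 1 : ℕ) : ZMod l) = ((D + n : ℕ) : ZMod l) := by
              exact add_left_cancel heq
            rw [this] at hval1
            rw [hval2] at hval1
            omega
          -- contradiction with the count
          have hcard := hcount (s(v, u)) he
          set a1 : {i : ZMod l // s(R i, R (i + 1)) = s(v, u)} := ⟨p, e1⟩
          set a2 : {i : ZMod l // s(R i, R (i + 1)) = s(v, u)} :=
            ⟨p + ((D - 1 : ℕ) : ZMod l), e2⟩
          set a3 : {i : ZMod l // s(R i, R (i + 1)) = s(v, u)} :=
            ⟨p + ((D + n : ℕ) : ZMod l), e3⟩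
          have h12 : a1 ≠ a2 := fun hc => hne12 (congrArg Subtype.val hc)
          have h13 : a1 ≠ a3 := fun hc => hne13 (congrArg Subtype.val hc)
          have h23 : a2 ≠ a3 := fun hc => hne23 (congrArg Subtype.val hc)
          rw [Nat.card_eq_two_iff] at hcard
          obtain ⟨a, b, _, huniv⟩ := hcard
          have m1 : a1 ∈ ({a, b} : Set _) := huniv ▸ Set.mem_univ a1
          have m2 : a2 ∈ ({a, b} : Set _) := huniv ▸ Set.mem_univ a2
          have m3 : a3 ∈ ({a, b} : Set _) := huniv ▸ Set.mem_univ a3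
          simp only [Set.mem_insert_iff, Set.mem_singleton_iff] at m1 m2 m3
          rcases m1 with m1 | m1 <;> rcases m2 with m2 | m2 <;> rcases m3 with m3 | m3 <;>
            first
              | exact h12 (m1.trans m2.symm)
              | exact h13 (m1.trans m3.symm)
              | exact h23 (m2.trans m3.symm)
      have hsub : s - D ≤ l - D := by omega
      have : p + ((D + (s - D) : ℕ) : ZMod l) = j := by
        have : D + (s - D) = s := by omega
        rw [this, ← hjp]
      exact hout (s - D) hsub (this ▸ hj)
  refine ⟨u, huv, ?_, ?_⟩
  · ext w
    simp only [Set.mem_setOf_eq]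
    constructor
    · rintro ⟨i, hri, hbtw⟩
      obtain ⟨t, ht0, htD, hit⟩ := hbet' i hbtw
      have : R i ∈ C := hit ▸ hind t ht0 htD
      rw [hri] at this
      obtain ⟨wk, hwk⟩ := this
      exact ⟨wk.bypass, wk.bypass_isPath, fun hm => hwk (wk.support_bypass_subset hm)⟩
    · rintro ⟨wk, _, hwk⟩
      obtain ⟨j, hj⟩ := hsurj w
      have : R j ∈ C := by rw [hj]; exact ⟨wk, hwk⟩
      exact ⟨j, hj, hpos j this⟩
  · rintro w ⟨i, hri, hbtw⟩ j hrj
    obtain ⟨t, ht0, htD, hit⟩ := hbet' i hbtw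
    have hwC : R i ∈ C := hit ▸ hind t ht0 htD
    rw [hri, ← hrj] at hwC
    exact hpos j hwC
end

section
/- The intervals between consecutive positions of a fixed vertex v on the Euler-tour virtual ring of a tree partition the remaining positions: every position of any vertex w ≠ v lies in exactly one interval [p_i+1, p_{i+1}-1], and moreover all positions of a given vertex w lie in the same interval. -/
private lemma zval_neg {l : ℕ} [NeZero l] (a : ZMod l) (h : a ≠ 0) :
    (-a).val = l - a.val := by
  haveI : NeZero a := ⟨h⟩
  exact ZMod.val_neg_of_ne_zero a

def AvoidReach {V : Type} (T : SimpleGraph V) (v a b : V) : Prop :=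
  ∃ w : T.Walk a b, v ∉ w.support

lemma AvoidReach.symm {V : Type} {T : SimpleGraph V} {v a b : V}
    (h : AvoidReach T v a b) : AvoidReach T v b a := by
  obtain ⟨w, hw⟩ := h
  exact ⟨w.reverse, by simpa [SimpleGraph.Walk.support_reverse] using hw⟩

lemma AvoidReach.trans {V : Type} {T : SimpleGraph V} {v a b c : V}
    (h : AvoidReach T v a b) (h' : AvoidReach T v b c) : AvoidReach T v a c := by
  obtain ⟨w, hw⟩ := h; obtain ⟨w', hw'⟩ := h'
  refine ⟨w.append w', ?_⟩
  rw [SimpleGraph.Walk.mem_support_append_iff]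
  tauto

lemma nbr_eq {V : Type} {T : SimpleGraph V} (hT : T.IsTree) {v u u' : V}
    (hu : T.Adj v u) (hu' : T.Adj v u') (h : AvoidReach T v u u') : u = u' := by
  classical
  by_contra hne
  obtain ⟨W, hW⟩ := h
  have hvP : v ∉ (W.toPath : T.Walk u u').support := fun hv => hW (W.support_toPath_subset hv)
  have hP2 : (SimpleGraph.Walk.cons hu.symm (SimpleGraph.Walk.cons hu' SimpleGraph.Walk.nil)).IsPath := by
    rw [SimpleGraph.Walk.isPath_def]
    simp [hne, hu.ne, hu.ne', hu'.ne, hu'.ne']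
  have hup := hT.IsAcyclic.path_unique W.toPath ⟨_, hP2⟩
  have hmem : v ∈ (W.toPath : T.Walk u u').support := by
    rw [hup]
    simp
  exact hvP hmem

lemma chain_reach {V : Type} {T : SimpleGraph V} {l : ℕ} {R : ZMod l → V}
    (hadj : ∀ i : ZMod l, T.Adj (R i) (R (i + 1))) {v : V} (i : ZMod l) :
    ∀ n : ℕ, (∀ k : ℕ, k ≤ n → R (i + (k : ZMod l)) ≠ v) →
      AvoidReach T v (R i) (R (i + (n : ZMod l))) := by
  intro n
  induction n with
  | zero =>
    intro hk
    have h0 : i + ((0:ℕ) : ZMod l) = i := by push_cast; ring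
    rw [h0]
    refine ⟨SimpleGraph.Walk.nil, ?_⟩
    simp only [SimpleGraph.Walk.support_nil, List.mem_singleton]
    intro hvv
    exact hk 0 le_rfl (by rw [h0]; exact hvv.symm)
  | succ n ih =>
    intro hk
    have key : i + ((n+1 : ℕ) : ZMod l) = (i + (n : ZMod l)) + 1 := by push_cast; ring
    have h1 : AvoidReach T v (R i) (R (i + (n:ZMod l))) :=
      ih (fun k hkn => hk k (Nat.le_succ_of_le hkn))
    rw [key]
    refine h1.trans ⟨SimpleGraph.Walk.cons (hadj _) SimpleGraph.Walk.nil, ?_⟩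
    have e1 : R (i + (n:ZMod l)) ≠ v := hk n (Nat.le_succ n)
    have e2 : R ((i + (n:ZMod l)) + 1) ≠ v := by rw [← key]; exact hk (n+1) le_rfl
    simp only [SimpleGraph.Walk.support_cons, SimpleGraph.Walk.support_nil, List.mem_cons,
      List.mem_singleton]
    rintro (hvv | hvv | hvv)
    · exact e1 hvv.symm
    · exact e2 hvv.symm
    · exact (List.not_mem_nil hvv)

lemma consec_unique {V : Type} {l : ℕ} [NeZero l] {R : ZMod l → V} {v : V}
    {p q p' q' j : ZMod l} (h1 : ConsecPos R v p q) (h2 : ConsecPos R v p' q')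
    (b1 : CcwStrictBetween j p q) (b2 : CcwStrictBetween j p' q') : p = p' ∧ q = q' := by
  obtain ⟨hp, hq, hmin⟩ := h1
  obtain ⟨hp', hq', hmin'⟩ := h2
  by_cases e1 : p = q
  · subst e1
    have hall : ∀ i, R i = v → i = p := by
      intro i hi
      have := hmin i hi
      simp only [CcwStrictBetween, eq_self_iff_true, if_true, not_not] at this
      exact this
    exact ⟨(hall p' hp').symm, (hall q' hq').symm⟩
  · by_cases e2 : p' = q'
    · exfalso
      subst e2
      have hall : ∀ i, R i = v → i = p' := by
        intro i hi
        have := hmin' i hi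
        simp only [CcwStrictBetween, eq_self_iff_true, if_true, not_not] at this
        exact this
      exact e1 ((hall p hp).trans (hall q hq).symm)
    · simp only [CcwStrictBetween, if_neg e1] at b1
      simp only [CcwStrictBetween, if_neg e2] at b2
      by_cases epp : p = p'
      · subst epp
        refine ⟨rfl, ?_⟩
        have n1 := hmin q' hq'
        have n2 := hmin' q hq
        simp only [CcwStrictBetween, if_neg e1, if_neg e2, not_and, not_lt] at n1 n2
        have v1 : 0 < (q' - p).val := by
          have : q' - p ≠ 0 := sub_ne_zero.mpr (fun h => e2 h.symm)
          have := (ZMod.val_eq_zero (q' - p)).not.mpr this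
          omega
        have v2 : 0 < (q - p).val := by
          have : q - p ≠ 0 := sub_ne_zero.mpr (fun h => e1 h.symm)
          have := (ZMod.val_eq_zero (q - p)).not.mpr this
          omega
        have hval : (q - p).val = (q' - p).val := le_antisymm (n1 v1) (n2 v2)
        have : q - p = q' - p := ZMod.val_injective l hval
        exact sub_left_inj.mp this
      · exfalso
        have hBne : p' - p ≠ 0 := sub_ne_zero.mpr (fun h => epp h.symm)
        have n1 := hmin p' hp'
        have n2 := hmin' p hp
        simp only [CcwStrictBetween, if_neg e1, if_neg e2, not_and, not_lt] at n1 n2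
        have v1 : 0 < (p' - p).val := by
          have := (ZMod.val_eq_zero (p' - p)).not.mpr hBne
          omega
        have v2 : 0 < (p - p').val := by
          have : p - p' ≠ 0 := sub_ne_zero.mpr epp
          have := (ZMod.val_eq_zero (p - p')).not.mpr this
          omega
        have g1 : (q - p).val ≤ (p' - p).val := n1 v1
        have g2 : (q' - p').val ≤ (p - p').val := n2 v2
        have hab : (j - p).val < (p' - p).val := lt_of_lt_of_le b1.2 g1
        have hbl : (p' - p).val < l := ZMod.val_lt _
        have hneg : (p - p').val = l - (p' - p).val := by
          have hpp : p - p' = -(p' - p) := by ring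
          rw [hpp, zval_neg _ hBne]
        have hjp' : (j - p').val = (j - p).val + (l - (p' - p).val) := by
          have hsub : j - p' = (j - p) + (-(p' - p)) := by ring
          rw [hsub, ZMod.val_add, zval_neg _ hBne]
          exact Nat.mod_eq_of_lt (by omega)
        have hlt2 : (j - p').val < (p - p').val := lt_of_lt_of_le b2.2 g2
        rw [hjp', hneg] at hlt2
        have ha : 0 < (j - p).val := b1.1
        omega

/-- The intervals between consecutive positions of a fixed vertex `v` on
the Euler-tour virtual ring of a tree partition the remaining positions: for every vertex
`w ≠ v` there is exactly one interval (between consecutive positions of `v`) containing a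
position of `w`, and moreover all positions of `w` lie in that same interval. -/
theorem stmt_7 {V : Type} [Fintype V] (T : SimpleGraph V) (hT : T.IsTree)
    (hn : 2 ≤ Fintype.card V) (l : ℕ) [NeZero l] (R : ZMod l → V)
    (h : IsEulerRing T l R) (v : V) :
    ∀ w : V, w ≠ v →
      ∃! pq : ZMod l × ZMod l, ConsecPos R v pq.1 pq.2 ∧
        ∀ j : ZMod l, R j = w → CcwStrictBetween j pq.1 pq.2 := by
  classical
  obtain ⟨hl, hsurj, hadj, hcard⟩ := h
  have hl0 : 0 < l := Nat.pos_of_ne_zero (NeZero.ne l)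
  obtain ⟨p₀, hp₀⟩ := hsurj v
  -- bounded witness for next occurrence of v
  have hexB : ∀ x : ZMod l, ∃ k : ℕ, k ≤ l - 1 ∧ R (x + ((k+1 : ℕ) : ZMod l)) = v := by
    intro x
    by_cases hx : x = p₀
    · refine ⟨l - 1, le_rfl, ?_⟩
      have h0 : ((l - 1 + 1 : ℕ) : ZMod l) = 0 := by
        rw [Nat.sub_add_cancel hl0, ZMod.natCast_self]
      rw [h0, add_zero, hx]; exact hp₀
    · have ht0 : (p₀ - x) ≠ 0 := sub_ne_zero.mpr (Ne.symm hx)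
      have hv1 : 1 ≤ (p₀ - x).val := by
        have := (ZMod.val_eq_zero (p₀ - x)).not.mpr ht0; omega
      have hvl := ZMod.val_lt (p₀ - x)
      refine ⟨(p₀ - x).val - 1, by omega, ?_⟩
      have hc : ((p₀ - x).val - 1 + 1 : ℕ) = (p₀ - x).val := by omega
      rw [hc, ZMod.natCast_rightInverse (p₀ - x)]
      have hxx : x + (p₀ - x) = p₀ := by ring
      rw [hxx]; exact hp₀
  have hex : ∀ x : ZMod l, ∃ k : ℕ, R (x + ((k+1 : ℕ) : ZMod l)) = v :=
    fun x => (hexB x).elim (fun k hk => ⟨k, hk.2⟩)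
  have hexp : ∀ x : ZMod l, ∃ k : ℕ, R (x - ((k+1 : ℕ) : ZMod l)) = v := by
    intro x
    by_cases hx : x = p₀
    · refine ⟨l - 1, ?_⟩
      have h0 : ((l - 1 + 1 : ℕ) : ZMod l) = 0 := by
        rw [Nat.sub_add_cancel hl0, ZMod.natCast_self]
      rw [h0, sub_zero, hx]; exact hp₀
    · have ht0 : (x - p₀) ≠ 0 := sub_ne_zero.mpr hx
      have hv1 : 1 ≤ (x - p₀).val := by
        have := (ZMod.val_eq_zero (x - p₀)).not.mpr ht0; omega
      refine ⟨(x - p₀).val - 1, ?_⟩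
      have hc : ((x - p₀).val - 1 + 1 : ℕ) = (x - p₀).val := by omega
      rw [hc, ZMod.natCast_rightInverse (x - p₀)]
      have hxx : x - (x - p₀) = p₀ := by ring
      rw [hxx]; exact hp₀
  set D : ZMod l → ℕ := fun x => Nat.find (hex x) + 1 with hDdef
  set M : ZMod l → ℕ := fun x => Nat.find (hexp x) + 1 with hMdef
  have hDspec : ∀ x, R (x + ((D x : ℕ) : ZMod l)) = v := fun x => Nat.find_spec (hex x)
  have hMspec : ∀ x, R (x - ((M x : ℕ) : ZMod l)) = v := fun x => Nat.find_spec (hexp x)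
  have hDpos : ∀ x, 0 < D x := fun x => Nat.succ_pos _
  have hMpos : ∀ x, 0 < M x := fun x => Nat.succ_pos _
  have hDle : ∀ x, D x ≤ l := by
    intro x
    obtain ⟨k, hk1, hk2⟩ := hexB x
    have hfind : Nat.find (hex x) ≤ k := Nat.find_le hk2
    have hDx : D x = Nat.find (hex x) + 1 := rfl
    omega
  have hDmin : ∀ x (s : ℕ), 0 < s → s < D x → R (x + (s : ZMod l)) ≠ v := by
    intro x s hs1 hs2 hc
    have hDx : D x = Nat.find (hex x) + 1 := rfl
    have hmin : ¬ R (x + ((s - 1 + 1 : ℕ) : ZMod l)) = v := Nat.find_min (hex x) (by omega)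
    rw [Nat.sub_add_cancel hs1] at hmin
    exact hmin hc
  have hMmin : ∀ x (s : ℕ), 0 < s → s < M x → R (x - (s : ZMod l)) ≠ v := by
    intro x s hs1 hs2 hc
    have hMx : M x = Nat.find (hexp x) + 1 := rfl
    have hmin : ¬ R (x - ((s - 1 + 1 : ℕ) : ZMod l)) = v := Nat.find_min (hexp x) (by omega)
    rw [Nat.sub_add_cancel hs1] at hmin
    exact hmin hc
  set P : ZMod l → ZMod l := fun j => j - ((M j : ℕ) : ZMod l) with hPdef
  have hPv : ∀ j, R (P j) = v := fun j => hMspec j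
  have hPadd : ∀ j, P j + ((M j : ℕ) : ZMod l) = j := fun j => by
    simp only [hPdef]; ring
  have hMD : ∀ j, R j ≠ v → M j < D (P j) := by
    intro j hj
    have hstep : ∀ s : ℕ, 0 < s → s ≤ M j → R (P j + (s : ZMod l)) ≠ v := by
      intro s hs1 hs2
      rcases eq_or_lt_of_le hs2 with he | hlt
      · rw [he, hPadd j]; exact hj
      · have hcast : P j + (s : ZMod l) = j - ((M j - s : ℕ) : ZMod l) := by
          rw [Nat.cast_sub (le_of_lt hlt)]
          simp only [hPdef]; ring
        rw [hcast]
        exact hMmin j (M j - s) (by omega) (by omega)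
    by_contra hle
    push_neg at hle
    exact hstep (D (P j)) (hDpos _) hle (hDspec (P j))
  -- betweenness
  have hBet : ∀ (p : ZMod l) (m : ℕ), 0 < m → m < D p →
      CcwStrictBetween (p + (m : ZMod l)) p (p + ((D p : ℕ) : ZMod l)) := by
    intro p m hm1 hm2
    have hdl := hDle p
    have hmL : m < l := lt_of_lt_of_le hm2 hdl
    rcases eq_or_lt_of_le hdl with he | hlt
    · have h0 : ((D p : ℕ) : ZMod l) = 0 := by rw [he, ZMod.natCast_self]
      rw [h0, add_zero]
      simp only [CcwStrictBetween, eq_self_iff_true, if_true]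
      intro hc
      have h1 : ((m:ℕ) : ZMod l) = 0 := by
        have := congrArg (fun z => z - p) hc
        simpa using this
      have h2 := ZMod.val_cast_of_lt hmL
      rw [h1, ZMod.val_zero] at h2
      omega
    · have hne : p ≠ p + ((D p:ℕ) : ZMod l) := by
        intro hc
        have h1 : ((D p:ℕ) : ZMod l) = 0 := by
          have := congrArg (fun z => z - p) hc.symm
          simpa using this
        have h2 := ZMod.val_cast_of_lt hlt
        rw [h1, ZMod.val_zero] at h2
        have := hDpos p; omega
      simp only [CcwStrictBetween, if_neg hne]
      constructor
      · rw [add_sub_cancel_left, ZMod.val_cast_of_lt hmL]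
        exact hm1
      · rw [add_sub_cancel_left, add_sub_cancel_left, ZMod.val_cast_of_lt hmL,
          ZMod.val_cast_of_lt hlt]
        exact hm2
  -- consecutive positions
  have hCons : ∀ p : ZMod l, R p = v → ConsecPos R v p (p + ((D p : ℕ) : ZMod l)) := by
    intro p hp
    refine ⟨hp, hDspec p, ?_⟩
    intro i hi hbet
    have hdl := hDle p
    rcases eq_or_lt_of_le hdl with he | hlt
    · have h0 : ((D p : ℕ) : ZMod l) = 0 := by rw [he, ZMod.natCast_self]
      rw [h0, add_zero] at hbet
      simp only [CcwStrictBetween, eq_self_iff_true, if_true] at hbet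
      have hs0 : 0 < (i - p).val := by
        have : i - p ≠ 0 := sub_ne_zero.mpr hbet
        have := (ZMod.val_eq_zero (i - p)).not.mpr this; omega
      have hsl : (i - p).val < l := ZMod.val_lt _
      have hieq : i = p + (((i - p).val : ℕ) : ZMod l) := by
        rw [ZMod.natCast_rightInverse (i - p)]; ring
      exact hDmin p ((i - p).val) hs0 (by omega) (by rw [← hieq]; exact hi)
    · have hne : p ≠ p + ((D p:ℕ) : ZMod l) := by
        intro hc
        have h1 : ((D p:ℕ) : ZMod l) = 0 := by
          have := congrArg (fun z => z - p) hc.symm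
          simpa using this
        have h2 := ZMod.val_cast_of_lt hlt
        rw [h1, ZMod.val_zero] at h2
        have := hDpos p; omega
      simp only [CcwStrictBetween, if_neg hne] at hbet
      rw [add_sub_cancel_left, ZMod.val_cast_of_lt hlt] at hbet
      have hieq : i = p + (((i - p).val : ℕ) : ZMod l) := by
        rw [ZMod.natCast_rightInverse (i - p)]; ring
      exact hDmin p ((i - p).val) hbet.1 hbet.2 (by rw [← hieq]; exact hi)
  have hcastD : ∀ (p : ZMod l), p + ((D p - 1 : ℕ) : ZMod l) + 1 = p + ((D p : ℕ) : ZMod l) := by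
    intro p
    have h1 : (D p - 1) + 1 = D p := by have := hDpos p; omega
    have h2 : ((D p - 1 : ℕ) : ZMod l) + 1 = (((D p - 1) + 1 : ℕ) : ZMod l) := by push_cast; ring
    rw [add_assoc, h2, h1]
  intro w hw
  obtain ⟨j₀, hj₀⟩ := hsurj w
  have hRne : ∀ j : ZMod l, R j = w → R j ≠ v := fun j hj => by rw [hj]; exact hw
  have hMain : ∀ j : ZMod l, R j = w →
      T.Adj v (R (P j + 1)) ∧ AvoidReach T v (R (P j + 1)) (R j) ∧
      T.Adj v (R (P j + ((D (P j) - 1 : ℕ) : ZMod l))) ∧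
      AvoidReach T v (R j) (R (P j + ((D (P j) - 1 : ℕ) : ZMod l))) := by
    intro j hj
    have hjv := hRne j hj
    have hpv : R (P j) = v := hPv j
    have hmd : M j < D (P j) := hMD j hjv
    have hm1 : 0 < M j := hMpos j
    have hjpm : j = P j + ((M j : ℕ) : ZMod l) := (hPadd j).symm
    have hadj1 : T.Adj v (R (P j + 1)) := by
      have := hadj (P j); rwa [hpv] at this
    have hc1 : AvoidReach T v (R (P j + 1)) (R (P j + 1 + ((M j - 1 : ℕ) : ZMod l))) := by
      apply chain_reach hadj
      intro k hk
      have hcc : P j + 1 + (k : ZMod l) = P j + ((k + 1 : ℕ) : ZMod l) := by push_cast; ring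
      rw [hcc]
      exact hDmin (P j) (k+1) (Nat.succ_pos k) (by omega)
    have he1 : P j + 1 + ((M j - 1 : ℕ) : ZMod l) = j := by
      rw [Nat.cast_sub hm1, Nat.cast_one]
      have hr : P j + 1 + (((M j : ℕ) : ZMod l) - 1) = P j + ((M j : ℕ) : ZMod l) := by ring
      rw [hr, hPadd j]
    rw [he1] at hc1
    have hc2 : AvoidReach T v (R (P j + ((M j : ℕ) : ZMod l)))
        (R (P j + ((M j : ℕ) : ZMod l) + ((D (P j) - 1 - M j : ℕ) : ZMod l))) := by
      apply chain_reach hadj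
      intro k hk
      have hcc : P j + ((M j : ℕ) : ZMod l) + (k : ZMod l) = P j + ((M j + k : ℕ) : ZMod l) := by
        push_cast; ring
      rw [hcc]
      exact hDmin (P j) (M j + k) (by omega) (by omega)
    have he2 : P j + ((M j : ℕ) : ZMod l) + ((D (P j) - 1 - M j : ℕ) : ZMod l) =
        P j + ((D (P j) - 1 : ℕ) : ZMod l) := by
      rw [Nat.cast_sub (by omega : M j ≤ D (P j) - 1)]
      push_cast
      ring
    rw [he2, ← hjpm] at hc2
    have hadj2 : T.Adj v (R (P j + ((D (P j) - 1 : ℕ) : ZMod l))) := by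
      have hstep := hadj (P j + ((D (P j) - 1 : ℕ) : ZMod l))
      rw [hcastD (P j), hDspec (P j)] at hstep
      exact hstep.symm
    exact ⟨hadj1, hc1, hadj2, hc2⟩
  have hKey : ∀ j j' : ZMod l, R j = w → R j' = w → P j = P j' := by
    intro j j' hj hj'
    by_contra hne
    obtain ⟨a1, c1, a2, c2⟩ := hMain j hj
    obtain ⟨a1', c1', _, _⟩ := hMain j' hj'
    have hjj : R j' = R j := by rw [hj, hj']
    rw [hjj] at c1'
    have e13 : R (P j + 1) = R (P j' + 1) := nbr_eq hT a1 a1' (c1.trans c1'.symm)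
    have e12 : R (P j + 1) = R (P j + ((D (P j) - 1 : ℕ) : ZMod l)) :=
      nbr_eq hT a1 a2 (c1.trans c2)
    have hE : s(v, R (P j + 1)) ∈ T.edgeSet := a1
    have h2 := hcard _ hE
    have k1 : s(R (P j), R (P j + 1)) = s(v, R (P j + 1)) := by rw [hPv j]
    have k2 : s(R (P j'), R (P j' + 1)) = s(v, R (P j + 1)) := by rw [hPv j', ← e13]
    have k3 : s(R (P j + ((D (P j) - 1 : ℕ) : ZMod l)),
        R (P j + ((D (P j) - 1 : ℕ) : ZMod l) + 1)) = s(v, R (P j + 1)) := by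
      rw [hcastD (P j), hDspec (P j), ← e12, Sym2.eq_swap]
    have d1 : P j ≠ P j + ((D (P j) - 1 : ℕ) : ZMod l) := by
      intro hc
      have hh := congrArg R hc
      rw [hPv j, ← e12] at hh
      exact a1.ne hh
    have d2 : P j' ≠ P j + ((D (P j) - 1 : ℕ) : ZMod l) := by
      intro hc
      have hh := congrArg R hc
      rw [hPv j', ← e12] at hh
      exact a1.ne hh
    have h3 : 3 ≤ Nat.card {i : ZMod l // s(R i, R (i + 1)) = s(v, R (P j + 1))} := by
      rw [Nat.card_eq_fintype_card]
      have hsub : ({⟨P j, k1⟩, ⟨P j', k2⟩, ⟨_, k3⟩} :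
          Finset {i : ZMod l // s(R i, R (i + 1)) = s(v, R (P j + 1))}).card ≤
          Fintype.card {i : ZMod l // s(R i, R (i + 1)) = s(v, R (P j + 1))} :=
        Finset.card_le_univ _
      have nm1 : (⟨P j, k1⟩ : {i : ZMod l // s(R i, R (i + 1)) = s(v, R (P j + 1))}) ∉
          ({⟨P j', k2⟩, ⟨_, k3⟩} :
            Finset {i : ZMod l // s(R i, R (i + 1)) = s(v, R (P j + 1))}) := by
        simp only [Finset.mem_insert, Finset.mem_singleton]
        rintro (hc | hc)
        · exact hne (congrArg Subtype.val hc)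
        · exact d1 (congrArg Subtype.val hc)
      have nm2 : (⟨P j', k2⟩ : {i : ZMod l // s(R i, R (i + 1)) = s(v, R (P j + 1))}) ∉
          ({⟨_, k3⟩} : Finset {i : ZMod l // s(R i, R (i + 1)) = s(v, R (P j + 1))}) := by
        simp only [Finset.mem_singleton]
        intro hc
        exact d2 (congrArg Subtype.val hc)
      rw [Finset.card_insert_of_notMem nm1, Finset.card_insert_of_notMem nm2,
        Finset.card_singleton] at hsub
      exact hsub
    omega
  refine ⟨(P j₀, P j₀ + ((D (P j₀) : ℕ) : ZMod l)), ⟨hCons (P j₀) (hPv j₀), ?_⟩, ?_⟩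
  · intro j hj
    have hpp := hKey j j₀ hj hj₀
    have hb := hBet (P j) (M j) (hMpos j) (hMD j (hRne j hj))
    rw [hPadd j] at hb
    rw [hpp] at hb
    exact hb
  · rintro ⟨p', q'⟩ ⟨hc', hb'⟩
    have hb₀ := hb' j₀ hj₀
    have hbo : CcwStrictBetween j₀ (P j₀) (P j₀ + ((D (P j₀) : ℕ) : ZMod l)) := by
      have hb := hBet (P j₀) (M j₀) (hMpos j₀) (hMD j₀ (hRne j₀ hj₀))
      rwa [hPadd j₀] at hb
    obtain ⟨e1, e2⟩ := consec_unique hc' (hCons (P j₀) (hPv j₀)) hb₀ hbo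
    exact Prod.ext e1 e2
end

section
/- Let v be a node with positions p_1 < ... < p_s in cyclic order on the Euler-tour virtual ring of a tree T. The vertex sets occurring in the s intervals [p_i, p_{i+1}) (half-open, cyclic) partition the vertex set V of T in the sense that every vertex w ≠ v has all its positions within exactly one such interval, and v itself has exactly one position (the left endpoint) in each interval. -/
/-- `x` lies in the half-open ccw interval `[a, b)` on `ZMod l`
(the whole ring if `a = b`). -/
def InHalfOpen {l : ℕ} (x a b : ZMod l) : Prop :=
  if a = b then True else (x - a).val < (b - a).val

section ZModHelpers
variable {l : ℕ} [NeZero l]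

lemma zmod_val_inj {a b : ZMod l} (h : a.val = b.val) : a = b := by
  rw [← ZMod.natCast_rightInverse a, ← ZMod.natCast_rightInverse b, h]

lemma val_sub_of_le {a b : ZMod l} (h : b.val ≤ a.val) : (a - b).val = a.val - b.val := by
  have ha : ((a.val : ℕ) : ZMod l) = a := ZMod.natCast_rightInverse a
  have hb : ((b.val : ℕ) : ZMod l) = b := ZMod.natCast_rightInverse b
  have : a - b = ((a.val - b.val : ℕ) : ZMod l) := by rw [Nat.cast_sub h, ha, hb]
  rw [this, ZMod.val_cast_of_lt (lt_of_le_of_lt (Nat.sub_le _ _) (ZMod.val_lt a))]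

lemma val_sub_pos {a b : ZMod l} (h : a ≠ b) : 0 < (a - b).val := by
  rcases Nat.eq_zero_or_pos (a - b).val with h0 | h0
  · exact absurd (sub_eq_zero.mp ((ZMod.val_eq_zero _).mp h0)) h
  · exact h0

end ZModHelpers

section Combinatorial
variable {V : Type} {l : ℕ} [NeZero l] {R : ZMod l → V} {v : V}

lemma all_eq_of_consec_self {p : ZMod l} (hpp : ConsecPos R v p p) :
    ∀ i, R i = v → i = p := by
  intro i hi
  have := hpp.2.2 i hi
  simp [CcwStrictBetween] at this
  exact this

lemma left_min_aux {p q x p' : ZMod l} (hpq : ConsecPos R v p q) (hne : p ≠ q)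
    (hx : (x - p).val < (q - p).val) (hp' : R p' = v)
    (hlt : (x - p').val < (x - p).val) : False := by
  have h1 : p' - p = (x - p) - (x - p') := by ring
  have h2 : (p' - p).val = (x - p).val - (x - p').val := by
    rw [h1, val_sub_of_le hlt.le]
  apply hpq.2.2 p' hp'
  unfold CcwStrictBetween
  rw [if_neg hne]
  omega

lemma succ_unique {p q q' : ZMod l} (hpq : ConsecPos R v p q) (hpq' : ConsecPos R v p q') :
    q = q' := by
  by_cases h1 : p = q
  · subst h1
    exact (all_eq_of_consec_self hpq q' hpq'.2.1).symm
  by_cases h2 : p = q'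
  · subst h2
    exact all_eq_of_consec_self hpq' q hpq.2.1
  by_contra hne
  have hv : (q - p).val ≠ (q' - p).val := fun he => hne (by
    exact sub_left_inj.mp (zmod_val_inj he))
  rcases hv.lt_or_gt with hlt | hlt
  · exact hpq'.2.2 q hpq.2.1 (by
      unfold CcwStrictBetween; rw [if_neg h2]
      exact ⟨val_sub_pos (Ne.symm h1), hlt⟩)
  · exact hpq.2.2 q' hpq'.2.1 (by
      unfold CcwStrictBetween; rw [if_neg h1]
      exact ⟨val_sub_pos (Ne.symm h2), hlt⟩)

lemma pred_unique {p p' q : ZMod l} (hpq : ConsecPos R v p q) (hpq' : ConsecPos R v p' q) :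
    p = p' := by
  by_cases h1 : p = q
  · subst h1
    exact (all_eq_of_consec_self hpq p' hpq'.1).symm
  by_cases h2 : p' = q
  · subst h2
    exact absurd (all_eq_of_consec_self hpq' p hpq.1) h1
  by_contra hne
  have hv : (q - p).val ≠ (q - p').val := fun he => hne (by
    have : q - p = q - p' := zmod_val_inj he
    exact sub_right_injective this)
  rcases hv.lt_or_gt with hlt | hlt
  · -- p strictly between p' and q
    apply hpq'.2.2 p hpq.1
    unfold CcwStrictBetween; rw [if_neg h2]
    have h3 : p - p' = (q - p') - (q - p) := by ring
    have h4 : (p - p').val = (q - p').val - (q - p).val := by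
      rw [h3, val_sub_of_le hlt.le]
    have h5 : 0 < (q - p).val := val_sub_pos (Ne.symm h1)
    have h6 : 0 < (p - p').val := val_sub_pos hne
    omega
  · apply hpq.2.2 p' hpq'.1
    unfold CcwStrictBetween; rw [if_neg h1]
    have h3 : p' - p = (q - p) - (q - p') := by ring
    have h4 : (p' - p).val = (q - p).val - (q - p').val := by
      rw [h3, val_sub_of_le hlt.le]
    have h6 : 0 < (p' - p).val := val_sub_pos (Ne.symm hne)
    have h5 : 0 < (q - p').val := val_sub_pos (Ne.symm h2)
    omega

lemma consec_unique_s11 {p q p' q' x : ZMod l} (hpq : ConsecPos R v p q)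
    (hpq' : ConsecPos R v p' q') (hx : InHalfOpen x p q) (hx' : InHalfOpen x p' q') :
    p = p' ∧ q = q' := by
  by_cases h1 : p = q
  · subst h1
    have e1 := (all_eq_of_consec_self hpq p' hpq'.1).symm
    have e2 := (all_eq_of_consec_self hpq q' hpq'.2.1).symm
    exact ⟨e1, e2⟩
  by_cases h2 : p' = q'
  · subst h2
    exact ⟨all_eq_of_consec_self hpq' p hpq.1, all_eq_of_consec_self hpq' q hpq.2.1⟩
  unfold InHalfOpen at hx hx'
  rw [if_neg h1] at hx
  rw [if_neg h2] at hx'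
  have hp : p = p' := by
    by_contra hne
    have hv : (x - p).val ≠ (x - p').val := fun he => hne (by
      have : x - p = x - p' := zmod_val_inj he
      exact sub_right_injective this)
    rcases hv.lt_or_gt with hlt | hlt
    · exact left_min_aux hpq' h2 hx' hpq.1 hlt
    · exact left_min_aux hpq h1 hx hpq'.1 hlt
  subst hp
  exact ⟨rfl, succ_unique hpq hpq'⟩

lemma exists_consec (hsurj : Function.Surjective R) (v : V) (x : ZMod l) :
    ∃ p q : ZMod l, ConsecPos R v p q ∧ InHalfOpen x p q := by
  classical
  set F : Finset (ZMod l) := Finset.univ.filter (fun s => R s = v) with hF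
  have hFne : F.Nonempty := by
    obtain ⟨p0, hp0⟩ := hsurj v
    exact ⟨p0, by simp [hF, hp0]⟩
  obtain ⟨p, hpF, hpmin⟩ := F.exists_min_image (fun s => (x - s).val) hFne
  have hRp : R p = v := by simpa [hF] using hpF
  by_cases hone : ∀ i, R i = v → i = p
  · refine ⟨p, p, ⟨hRp, hRp, ?_⟩, by simp [InHalfOpen]⟩
    intro i hi
    rw [hone i hi]
    simp [CcwStrictBetween]
  · push_neg at hone
    obtain ⟨i0, hi0, hi0ne⟩ := hone
    set G : Finset (ZMod l) := Finset.univ.filter (fun s => R s = v ∧ s ≠ p) with hG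
    have hGne : G.Nonempty := ⟨i0, by simp [hG, hi0, hi0ne]⟩
    obtain ⟨q, hqG, hqmin⟩ := G.exists_min_image (fun s => (s - p).val) hGne
    have hq : R q = v ∧ q ≠ p := by simpa [hG] using hqG
    have hpq : p ≠ q := Ne.symm hq.2
    refine ⟨p, q, ⟨hRp, hq.1, ?_⟩, ?_⟩
    · intro i hi hbet
      unfold CcwStrictBetween at hbet
      rw [if_neg hpq] at hbet
      have hiq : i ≠ p := by
        intro he
        rw [he, sub_self, ZMod.val_zero] at hbet
        exact lt_irrefl 0 hbet.1
      have := hqmin i (by simp [hG, hi, hiq])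
      omega
    · unfold InHalfOpen
      rw [if_neg hpq]
      by_contra hle
      push_neg at hle
      have h1 : x - q = (x - p) - (q - p) := by ring
      have h2 : (x - q).val = (x - p).val - (q - p).val := by rw [h1, val_sub_of_le hle]
      have h3 := hpmin q (by simp [hF, hq.1])
      have h4 : 0 < (q - p).val := val_sub_pos hq.2
      omega

end Combinatorial

section Tree

lemma neighbors_eq {V : Type} {T : SimpleGraph V} (hT : T.IsTree) {v u u' : V}
    (hu : T.Adj v u) (hu' : T.Adj v u')
    (W : T.Walk u u') (hW : v ∉ W.support) : u = u' := by
  classical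
  by_contra hne
  have hP2 : (SimpleGraph.Walk.cons hu.symm
      (SimpleGraph.Walk.cons hu' SimpleGraph.Walk.nil) : T.Walk u u').IsPath := by
    simp [SimpleGraph.Walk.isPath_def, hu.ne', hne, hu'.ne]
  have heq := hT.IsAcyclic.path_unique W.toPath ⟨_, hP2⟩
  have hv1 : v ∉ (W.toPath : T.Walk u u').support :=
    fun hm => hW (SimpleGraph.Walk.support_toPath_subset W hm)
  rw [heq] at hv1
  simp at hv1

lemma ring_walk {V : Type} {T : SimpleGraph V} {l : ℕ} {R : ZMod l → V}
    (hadj : ∀ i : ZMod l, T.Adj (R i) (R (i + 1))) (v : V) (p : ZMod l) :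
    ∀ k : ℕ, 1 ≤ k → (∀ m : ℕ, 1 ≤ m → m ≤ k → R (p + (m : ZMod l)) ≠ v) →
    ∃ W : T.Walk (R (p + 1)) (R (p + (k : ZMod l))), v ∉ W.support := by
  intro k
  induction k with
  | zero => omega
  | succ n ih =>
    intro _ hm
    by_cases hn : 1 ≤ n
    · obtain ⟨W, hW⟩ := ih hn (fun m h1 h2 => hm m h1 (le_trans h2 (Nat.le_succ n)))
      have hstep : T.Adj (R (p + (n : ZMod l))) (R (p + ((n + 1 : ℕ) : ZMod l))) := by
        push_cast
        rw [← add_assoc]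
        exact hadj (p + (n : ZMod l))
      refine ⟨W.concat hstep, ?_⟩
      rw [SimpleGraph.Walk.support_concat]
      intro hmem
      rcases List.mem_append.mp hmem with hc | hc
      · exact hW hc
      · exact hm (n + 1) (by omega) le_rfl (List.mem_singleton.mp hc).symm
    · have hn0 : n = 0 := by omega
      subst hn0
      have e : ((0 + 1 : ℕ) : ZMod l) = 1 := by norm_num
      rw [e]
      refine ⟨SimpleGraph.Walk.nil, ?_⟩
      simp only [SimpleGraph.Walk.support_nil, List.mem_singleton]
      intro hc
      exact hm 1 le_rfl le_rfl (by rw [Nat.cast_one, ← hc])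

lemma interval_data {V : Type} {T : SimpleGraph V} (hT : T.IsTree) {l : ℕ} [NeZero l]
    (hl : 2 ≤ l) {R : ZMod l → V}
    (hadj : ∀ i : ZMod l, T.Adj (R i) (R (i + 1))) {v : V}
    {p q j : ZMod l} (hpq : ConsecPos R v p q) (hne : p ≠ q) (hj : R j ≠ v)
    (hjin : InHalfOpen j p q) :
    T.Adj v (R (p + 1)) ∧ R (q - 1) = R (p + 1) ∧
      ∃ W : T.Walk (R (p + 1)) (R j), v ∉ W.support := by
  haveI : Fact (1 < l) := ⟨hl⟩
  have hjp : j ≠ p := fun he => hj (he ▸ hpq.1)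
  unfold InHalfOpen at hjin
  rw [if_neg hne] at hjin
  have hd1 : 0 < (j - p).val := val_sub_pos hjp
  have hd2 : 2 ≤ (q - p).val := by omega
  have hall : ∀ m : ℕ, 1 ≤ m → m ≤ (q - p).val - 1 → R (p + (m : ZMod l)) ≠ v := by
    intro m h1 h2 hRv
    apply hpq.2.2 _ hRv
    unfold CcwStrictBetween
    rw [if_neg hne]
    have hml : m < l := lt_of_le_of_lt (by omega : m ≤ (q - p).val) (ZMod.val_lt _)
    have : (p + (m : ZMod l) - p) = (m : ZMod l) := by ring
    rw [this, ZMod.val_cast_of_lt hml]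
    omega
  have hadjv : T.Adj v (R (p + 1)) := by
    have := hadj p
    rwa [hpq.1] at this
  refine ⟨hadjv, ?_, ?_⟩
  · -- R (q-1) = R (p+1)
    obtain ⟨W2, hW2⟩ := ring_walk hadj v p ((q - p).val - 1) (by omega)
      (fun m h1 h2 => hall m h1 h2)
    have hend : p + (((q - p).val - 1 : ℕ) : ZMod l) = q - 1 := by
      rw [Nat.cast_sub (by omega : 1 ≤ (q - p).val), Nat.cast_one,
        ZMod.natCast_rightInverse (q - p)]
      ring
    have hadjq : T.Adj v (R (q - 1)) := by
      have := hadj (q - 1)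
      rw [sub_add_cancel, hpq.2.1] at this
      exact this.symm
    exact (neighbors_eq hT hadjv hadjq (W2.copy rfl (congrArg R hend))
      (by rwa [SimpleGraph.Walk.support_copy])).symm
  · obtain ⟨W1, hW1⟩ := ring_walk hadj v p ((j - p).val) hd1
      (fun m h1 h2 => hall m h1 (by omega))
    have hend : p + (((j - p).val : ℕ) : ZMod l) = j := by
      rw [ZMod.natCast_rightInverse (j - p)]; ring
    exact ⟨W1.copy rfl (congrArg R hend), by rwa [SimpleGraph.Walk.support_copy]⟩

end Tree

section Main
variable {V : Type} [Fintype V]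

lemma same_interval {T : SimpleGraph V} (hT : T.IsTree) {l : ℕ} [NeZero l]
    (hl : 2 ≤ l) {R : ZMod l → V}
    (hadj : ∀ i : ZMod l, T.Adj (R i) (R (i + 1)))
    (hcount : ∀ e ∈ T.edgeSet, Nat.card {i : ZMod l // s(R i, R (i + 1)) = e} = 2)
    {v w : V} (hw : w ≠ v) {p q p' q' j j' : ZMod l}
    (hpq : ConsecPos R v p q) (hpq' : ConsecPos R v p' q')
    (hj : R j = w) (hjin : InHalfOpen j p q)
    (hj' : R j' = w) (hj'in : InHalfOpen j' p' q') :
    p = p' ∧ q = q' := by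
  classical
  by_contra hcon
  have hp_ne : p ≠ p' := by
    intro he
    exact hcon ⟨he, succ_unique (he ▸ hpq) hpq'⟩
  have hq_ne : q ≠ q' := by
    intro he
    exact hcon ⟨pred_unique (he ▸ hpq) hpq', he⟩
  have hne : p ≠ q := by
    intro he
    exact hp_ne (all_eq_of_consec_self (he ▸ hpq) p' hpq'.1).symm
  have hne' : p' ≠ q' := by
    intro he
    exact hp_ne (all_eq_of_consec_self (he ▸ hpq') p hpq.1)
  have hjv : R j ≠ v := by rw [hj]; exact hw
  have hjv' : R j' ≠ v := by rw [hj']; exact hw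
  obtain ⟨hadj1, heq1, W1, hW1⟩ := interval_data hT hl hadj hpq hne hjv hjin
  obtain ⟨hadj2, heq2, W2, hW2⟩ := interval_data hT hl hadj hpq' hne' hjv' hj'in
  -- connect the two branches through w
  have hjj : R j = R j' := by rw [hj, hj']
  have hu : R (p + 1) = R (p' + 1) := by
    refine neighbors_eq hT hadj1 hadj2
      (W1.append ((W2.reverse).copy hjj.symm rfl)) ?_
    rw [SimpleGraph.Walk.support_append]
    intro hm
    rcases List.mem_append.mp hm with hc | hc
    · exact hW1 hc
    · apply hW2
      have := List.mem_of_mem_tail hc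
      rw [SimpleGraph.Walk.support_copy, SimpleGraph.Walk.support_reverse] at this
      exact List.mem_reverse.mp this
  -- four distinct traversals of the edge s(v, R (p+1))
  have huv : R (p + 1) ≠ v := hadj1.ne'
  have he0 : s(v, R (p + 1)) ∈ T.edgeSet := (SimpleGraph.mem_edgeSet T).mpr hadj1
  have hcnt := hcount _ he0
  have hPp : s(R p, R (p + 1)) = s(v, R (p + 1)) := by rw [hpq.1]
  have hPp' : s(R p', R (p' + 1)) = s(v, R (p + 1)) := by rw [hpq'.1, ← hu]
  have hPq : s(R (q - 1), R (q - 1 + 1)) = s(v, R (p + 1)) := by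
    rw [sub_add_cancel, hpq.2.1, heq1]
    exact Sym2.eq_swap
  have hPq' : s(R (q' - 1), R (q' - 1 + 1)) = s(v, R (p + 1)) := by
    rw [sub_add_cancel, hpq'.2.1, heq2, ← hu]
    exact Sym2.eq_swap
  have hd1 : p ≠ q - 1 := by
    intro he
    apply huv
    rw [← heq1, ← he, hpq.1]
  have hd2 : p ≠ q' - 1 := by
    intro he
    apply huv
    rw [hu, ← heq2, ← he, hpq.1]
  have hd3 : p' ≠ q - 1 := by
    intro he
    apply huv
    rw [← heq1, ← he, hpq'.1]
  have hd4 : p' ≠ q' - 1 := by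
    intro he
    apply huv
    rw [hu, ← heq2, ← he, hpq'.1]
  have hd5 : q - 1 ≠ q' - 1 := fun he => hq_ne (by
    have := congrArg (fun x => x + 1) he
    simpa using this)
  have h4 : (4 : ℕ) ≤ Nat.card {i : ZMod l // s(R i, R (i + 1)) = s(v, R (p + 1))} := by
    have hle := Nat.card_le_card_of_injective
      (fun a : Fin 4 =>
        (match a with
         | 0 => ⟨p, hPp⟩
         | 1 => ⟨p', hPp'⟩
         | 2 => ⟨q - 1, hPq⟩
         | 3 => ⟨q' - 1, hPq'⟩ :
          {i : ZMod l // s(R i, R (i + 1)) = s(v, R (p + 1))}))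
      ?_
    · simpa using hle
    · intro a b hab
      exact match a, b, hab with
      | 0, 0, _ => rfl
      | 0, 1, hh => absurd (congrArg Subtype.val hh) hp_ne
      | 0, 2, hh => absurd (congrArg Subtype.val hh) hd1
      | 0, 3, hh => absurd (congrArg Subtype.val hh) hd2
      | 1, 0, hh => absurd (congrArg Subtype.val hh) hp_ne.symm
      | 1, 1, _ => rfl
      | 1, 2, hh => absurd (congrArg Subtype.val hh) hd3
      | 1, 3, hh => absurd (congrArg Subtype.val hh) hd4
      | 2, 0, hh => absurd (congrArg Subtype.val hh) hd1.symm
      | 2, 1, hh => absurd (congrArg Subtype.val hh) hd3.symm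
      | 2, 2, _ => rfl
      | 2, 3, hh => absurd (congrArg Subtype.val hh) hd5
      | 3, 0, hh => absurd (congrArg Subtype.val hh) hd2.symm
      | 3, 1, hh => absurd (congrArg Subtype.val hh) hd4.symm
      | 3, 2, hh => absurd (congrArg Subtype.val hh) hd5.symm
      | 3, 3, _ => rfl
  omega

end Main

/-- Let `v` have positions `p₁ < … < p_s` in cyclic order on the
Euler-tour virtual ring of a tree `T`. The half-open cyclic intervals `[pᵢ, pᵢ₊₁)` between
consecutive positions of `v` partition the vertex set: every vertex `w ≠ v` has all its
positions within exactly one such interval, and `v` itself has exactly one position (the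
left endpoint) in each interval. -/
theorem stmt_11 {V : Type} [Fintype V] (T : SimpleGraph V) (hT : T.IsTree)
    (hn : 2 ≤ Fintype.card V) (l : ℕ) [NeZero l] (R : ZMod l → V)
    (h : IsEulerRing T l R) (v : V) :
    (∀ w : V, w ≠ v →
      ∃! pq : ZMod l × ZMod l, ConsecPos R v pq.1 pq.2 ∧
        ∀ j : ZMod l, R j = w → InHalfOpen j pq.1 pq.2) ∧
    (∀ p q : ZMod l, ConsecPos R v p q →
      Nat.card {j : ZMod l // R j = v ∧ InHalfOpen j p q} = 1) := by
  obtain ⟨hcard, hsurj, hadj, hcount⟩ := h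
  have hl : 2 ≤ l := by omega
  constructor
  · intro w hw
    obtain ⟨j0, hj0⟩ := hsurj w
    obtain ⟨p, q, hpq, hj0in⟩ := exists_consec hsurj v j0
    have hall : ∀ j : ZMod l, R j = w → InHalfOpen j p q := by
      intro j hj
      obtain ⟨p', q', hpq', hjin⟩ := exists_consec hsurj v j
      obtain ⟨hp, hq⟩ := same_interval hT hl hadj hcount hw hpq hpq' hj0 hj0in hj hjin
      rw [hp, hq]
      exact hjin
    refine ⟨(p, q), ⟨hpq, hall⟩, ?_⟩
    rintro ⟨p', q'⟩ ⟨hpq', hall'⟩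
    obtain ⟨hp, hq⟩ := consec_unique_s11 hpq' hpq (hall' j0 hj0) (hall j0 hj0)
    exact Prod.ext hp hq
  · intro p q hpq
    rw [Nat.card_eq_one_iff_unique]
    have key : ∀ j : ZMod l, R j = v → InHalfOpen j p q → j = p := by
      intro j hj hin
      by_cases hne : p = q
      · exact all_eq_of_consec_self (hne ▸ hpq) j hj
      · by_contra hjp
        apply hpq.2.2 j hj
        unfold CcwStrictBetween
        unfold InHalfOpen at hin
        rw [if_neg hne] at hin ⊢
        exact ⟨val_sub_pos hjp, hin⟩
    constructor
    · constructor
      rintro ⟨a, ha, hain⟩ ⟨b, hb, hbin⟩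
      exact Subtype.ext ((key a ha hain).trans (key b hb hbin).symm)
    · refine ⟨p, hpq.1, ?_⟩
      unfold InHalfOpen
      by_cases hne : p = q
      · rw [if_pos hne]; trivial
      · rw [if_neg hne, sub_self, ZMod.val_zero]
        exact val_sub_pos (Ne.symm hne)
end

section
/- In the PSVR subscription scheme, a node u needs to update its routing entry for position p_u upon a new subscription by node w if and only if some position p_w of w lies counter-clockwise strictly between p_u and the currently stored next-subscriber position ns(p_u); consequently, only the nodes having a position in the cyclic interval [u', w) from the clockwise-closest existing subscriber u' to the new subscriber w need to receive the subscription message. -/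
/-- `q` is the counter-clockwise closest subscriber position to `p`, for the set `S` of
subscriber positions: `q ∈ S` and `q` minimizes the ccw distance from `p`. -/
def NsSpec {l : ℕ} (S : Set (ZMod l)) (p q : ZMod l) : Prop :=
  q ∈ S ∧ ∀ r ∈ S, (q - p).val ≤ (r - p).val

/-- Upon a new subscription adding the position set `W` (the positions of
the new subscriber `w`) to the existing subscriber positions `SubPos`, the next-subscriber
entry at a position `p` changes (`q' ≠ q`) if and only if some new position `pw ∈ W` lies
ccw strictly closer to `p` than the stored next subscriber `q`; consequently, if the entry
changes then `p` lies in the cyclic interval from the clockwise-closest existing subscriber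
to the new subscriber, i.e. there is `pw ∈ W` closer to `p` than `q` with no existing
subscriber position ccw between `p` and `pw`. -/
theorem stmt_14 (l : ℕ) [NeZero l] (SubPos W : Set (ZMod l)) (p q q' : ZMod l)
    (hq : NsSpec SubPos p q) (hq' : NsSpec (SubPos ∪ W) p q') :
    (q' ≠ q ↔ ∃ pw ∈ W, (pw - p).val < (q - p).val) ∧
    (q' ≠ q → ∃ pw ∈ W, (pw - p).val < (q - p).val ∧
      ∀ r ∈ SubPos, (pw - p).val ≤ (r - p).val) := by
  obtain ⟨hqS, hqmin⟩ := hq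
  obtain ⟨hq'S, hq'min⟩ := hq'
  have hle : (q' - p).val ≤ (q - p).val := hq'min q (Or.inl hqS)
  have key : q' ≠ q → (q' ∈ W ∧ (q' - p).val < (q - p).val) := by
    intro hne
    have hval : (q' - p).val ≠ (q - p).val := by
      intro h
      apply hne
      have : q' - p = q - p := ZMod.val_injective _ h
      exact sub_left_injective this
    have hlt : (q' - p).val < (q - p).val := lt_of_le_of_ne hle hval
    rcases hq'S with h | h
    · exact absurd hlt (not_lt.mpr (hqmin q' h))
    · exact ⟨h, hlt⟩
  constructor
  · constructor
    · intro hne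
      obtain ⟨hW, hlt⟩ := key hne
      exact ⟨q', hW, hlt⟩
    · rintro ⟨pw, hpw, hlt⟩ rfl
      exact absurd (hq'min pw (Or.inr hpw)) (not_le.mpr hlt)
  · intro hne
    obtain ⟨hW, hlt⟩ := key hne
    exact ⟨q', hW, hlt, fun r hr => hq'min r (Or.inl hr)⟩
end

section
/- In the PSVR forwarding algorithm, the endpoint parameter ep of a publication message is monotonically non-increasing along any forwarding path: whenever a node forwards a message, the new endpoint newEp lies counter-clockwise between the current position and the received endpoint (inclusive). Consequently every forwarding path on the ring visits positions in strictly counter-clockwise increasing order within the original interval and therefore terminates after at most l steps. -/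
/-- `isBetween x a b`: `x` lies in the ccw segment `{a+1, …, b}` from `a` to `b`, with the
convention `isBetween x y y = True`. -/
def isBetween {l : ℕ} (x a b : ZMod l) : Prop :=
  a = b ∨ (0 < (x - a).val ∧ (x - a).val ≤ (b - a).val)

instance {l : ℕ} [NeZero l] (x a b : ZMod l) : Decidable (isBetween x a b) := by
  unfold isBetween; infer_instance

/-- Along any PSVR forwarding path `(q k, e k)` — where at each step the
node at position `q k` holding endpoint `e k` computes the new endpoint
`e (k+1) = nextPos (q k)` if that lies ccw between `q k` and `e k` and `e (k+1) = e k`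
otherwise, and forwards to a position `q (k+1)` ccw strictly between `q k` and `e (k+1)` —
the endpoint is monotonically non-increasing: `e (k+1)` lies ccw between `q k` and `e k`
(inclusive). Consequently the visited positions are strictly ccw increasing within the
original interval, and the path terminates after at most `l` steps. -/
theorem stmt_18 (l : ℕ) [NeZero l] (nextPos : ZMod l → ZMod l)
    (m : ℕ) (q e : ℕ → ZMod l)
    (hstep : ∀ k, k < m →
      e (k + 1) = (if isBetween (nextPos (q k)) (q k) (e k) then nextPos (q k) else e k) ∧
      0 < (q (k + 1) - q k).val ∧ (q (k + 1) - q k).val < (e (k + 1) - q k).val) :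
    (∀ k, k < m → isBetween (e (k + 1)) (q k) (e k)) ∧
    (∀ j k, j < k → k ≤ m → (q j - q 0).val < (q k - q 0).val) ∧
    m ≤ l := by
  have hl : 0 < l := Nat.pos_of_ne_zero (NeZero.ne l)
  -- Part 1
  have h1 : ∀ k, k < m → isBetween (e (k + 1)) (q k) (e k) := by
    intro k hk
    obtain ⟨he, _, _⟩ := hstep k hk
    by_cases hb : isBetween (nextPos (q k)) (q k) (e k)
    · rw [he, if_pos hb]; exact hb
    · rw [he, if_neg hb]
      by_cases hqe : q k = e k
      · exact Or.inl hqe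
      · refine Or.inr ⟨?_, le_refl _⟩
        exact ZMod.val_pos.mpr (sub_ne_zero.mpr (Ne.symm hqe))
  -- G k : the "remaining interval length"
  set G : ℕ → ℕ := fun k => if q k = e k then l else (e k - q k).val with hG
  have hGpos : ∀ k, 0 < G k := by
    intro k
    by_cases h : q k = e k
    · simp [hG, h, hl]
    · simp only [hG, if_neg h]
      exact ZMod.val_pos.mpr (sub_ne_zero.mpr (Ne.symm h))
  -- bound: (e (k+1) - q k).val ≤ G k for k < m
  have hbound : ∀ k, k < m → (e (k + 1) - q k).val ≤ G k := by
    intro k hk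
    rcases h1 k hk with h | ⟨_, h⟩
    · simp only [hG, if_pos h]
      exact le_of_lt (ZMod.val_lt _)
    · by_cases hqe : q k = e k
      · simp only [hG, if_pos hqe]; exact le_of_lt (ZMod.val_lt _)
      · simpa only [hG, if_neg hqe] using h
  -- main invariant
  have inv : ∀ k, k ≤ m →
      (q k - q 0).val + G k ≤ l ∧ k ≤ (q k - q 0).val ∧
      ∀ j, j < k → (q j - q 0).val < (q k - q 0).val := by
    intro k
    induction k with
    | zero =>
      intro _
      refine ⟨?_, by simp, by omega⟩
      by_cases h : q 0 = e 0
      · simp [hG, h]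
      · simp only [hG, if_neg h, sub_self, ZMod.val_zero, zero_add]
        exact le_of_lt (ZMod.val_lt _)
    | succ k ih =>
      intro hk
      have hkm : k < m := hk
      obtain ⟨hIle, hIk, hImono⟩ := ih (le_of_lt hkm)
      obtain ⟨he, hd0, hdlt⟩ := hstep k hkm
      have hble : (e (k + 1) - q k).val ≤ G k := hbound k hkm
      -- val of new position difference
      have hsum : (q k - q 0).val + (q (k + 1) - q k).val < l := by
        have := hGpos k
        omega
      have hfval : (q (k + 1) - q 0).val = (q k - q 0).val + (q (k + 1) - q k).val := by
        have : q (k + 1) - q 0 = (q k - q 0) + (q (k + 1) - q k) := by ring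
        rw [this, ZMod.val_add_of_lt hsum]
      -- new G
      have hne : q (k + 1) ≠ e (k + 1) := by
        intro h
        rw [← h] at hdlt
        exact lt_irrefl _ hdlt
      have hGnew : G (k + 1) = (e (k + 1) - q k).val - (q (k + 1) - q k).val := by
        have heq : e (k + 1) - q (k + 1) = (e (k + 1) - q k) - (q (k + 1) - q k) := by ring
        simp only [hG, if_neg hne]
        rw [heq, ZMod.val_sub (le_of_lt hdlt)]
      refine ⟨?_, ?_, ?_⟩
      · rw [hfval, hGnew]; omega
      · omega
      · intro j hj
        rcases Nat.lt_succ_iff_lt_or_eq.mp hj with h | h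
        · exact lt_of_lt_of_le (hImono j h) (by omega)
        · subst h; omega
  refine ⟨h1, ?_, ?_⟩
  · intro j k hj hk
    exact (inv k hk).2.2 j hj
  · obtain ⟨hle, hk, _⟩ := inv m le_rfl
    have := hGpos m
    omega
end
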